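/- arXiv:2006.09734 — 3 statements merged into one kernel-verified Lean document; each statement's English description precedes it below -/
import Mathlib

section
/- Let Γ: ℝⁿ ⇒ ℝˡ be a set-valued mapping with closed graph and let (x̄,ȳ) ∈ ℝⁿ × ℝˡ with Γ(x̄) ≠ ∅. Then the limiting subdifferential of ρ_Γ at (x̄,ȳ) satisfies ∂ρ_Γ(x̄,ȳ) ⊆ ⋃_{y ∈ Π(ȳ,Γ(x̄))} N_{gph Γ}(x̄,y). -/
open Filter Topology RealInnerProductSpace
open scoped ENNReal NNReal

noncomputable section

/-- Fréchet (regular) normal cone to `A` at `x`. -/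
def frechetNC {E : Type*} [NormedAddCommGroup E] [InnerProductSpace ℝ E]
    (A : Set E) (x : E) : Set E :=
  {v | x ∈ A ∧ ∀ ε > 0, ∃ δ > 0, ∀ y ∈ A, ‖y - x‖ < δ → ⟪v, y - x⟫ ≤ ε * ‖y - x‖}

/-- Limiting (Mordukhovich) normal cone to `A` at `x`. -/
def limitingNC {E : Type*} [NormedAddCommGroup E] [InnerProductSpace ℝ E]
    (A : Set E) (x : E) : Set E :=
  {v | ∃ xk vk : ℕ → E, (∀ k, xk k ∈ A) ∧ Tendsto xk atTop (𝓝 x) ∧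
    (∀ k, vk k ∈ frechetNC A (xk k)) ∧ Tendsto vk atTop (𝓝 v)}

section SV
variable {E F : Type*} [NormedAddCommGroup E] [InnerProductSpace ℝ E]
  [NormedAddCommGroup F] [InnerProductSpace ℝ F]

/-- Pack a pair into the `ℓ²` product space. -/
def pl2 (x : E) (y : F) : WithLp 2 (E × F) := (WithLp.equiv 2 (E × F)).symm (x, y)

/-- Graph of a set-valued map, as a subset of the `ℓ²` product space. -/
def svGraph (Φ : E → Set F) : Set (WithLp 2 (E × F)) :=
  {p | (WithLp.equiv 2 (E × F) p).2 ∈ Φ (WithLp.equiv 2 (E × F) p).1}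

/-- Limiting coderivative `D*Φ(x,y)(ys)`. -/
def coderiv (Φ : E → Set F) (x : E) (y : F) (ys : F) : Set E :=
  {xs | pl2 xs (-ys) ∈ limitingNC (svGraph Φ) (pl2 x y)}

/-- Limiting subdifferential of a real-valued function. -/
def limSubdiff (f : E → ℝ) (x : E) : Set E :=
  {v | pl2 v (-1 : ℝ) ∈ limitingNC
    {p : WithLp 2 (E × ℝ) | f (WithLp.equiv 2 (E × ℝ) p).1 ≤ (WithLp.equiv 2 (E × ℝ) p).2}
    (pl2 x (f x))}

/-- The multiplier-union map `𝓜(x,y) = ⋃_λ D*Φ(x,y)(λ)`. -/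
def Mmap (Φ : E → Set F) (x : E) (y : F) : Set E := ⋃ l : F, coderiv Φ x y l

/-- Outer limit `Limsup_{x→x̄,y→0} 𝓜(x,y)`. -/
def MmapLimsup (Φ : E → Set F) (xb : E) : Set E :=
  {xs | ∃ (xk xsk : ℕ → E) (yk : ℕ → F), Tendsto xk atTop (𝓝 xb) ∧
    Tendsto yk atTop (𝓝 0) ∧ Tendsto xsk atTop (𝓝 xs) ∧
    ∀ k, xsk k ∈ Mmap Φ (xk k) (yk k)}

/-- AM-regularity. -/
def AMregular (Φ : E → Set F) (xb : E) : Prop := MmapLimsup Φ xb ⊆ Mmap Φ xb 0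
end SV

section NormOnly
variable {E F : Type*} [NormedAddCommGroup E] [NormedAddCommGroup F]

/-- Generalized distance function `ρ_Γ`, with value `+∞` when `Γ x = ∅`. -/
def rhoD (Γ : E → Set F) (x : E) (y : F) : ℝ≥0∞ := ⨅ z ∈ Γ x, (‖y - z‖₊ : ℝ≥0∞)

/-- Set of projections `Π(y, Γ x)`. -/
def projSet (Γ : E → Set F) (x : E) (y : F) : Set F :=
  {z | z ∈ Γ x ∧ (‖y - z‖₊ : ℝ≥0∞) = rhoD Γ x y}

/-- Aubin property of `Φ` at `(xb, yb) ∈ gph Φ`. -/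
def AubinAt (Φ : E → Set F) (xb : E) (yb : F) : Prop :=
  ∃ U ∈ 𝓝 xb, ∃ V ∈ 𝓝 yb, ∃ κ : ℝ, 0 < κ ∧
    ∀ x ∈ U, ∀ x' ∈ U, ∀ z ∈ Φ x ∩ V, ∃ w ∈ Φ x', ‖z - w‖ ≤ κ * ‖x - x'‖
end NormOnly


/-- Limiting subdifferential of the (extended-real-valued) generalized distance
function `ρ_Γ`, defined through limiting normals to its epigraph. -/
def limSubdiffRho {E F : Type*} [NormedAddCommGroup E] [InnerProductSpace ℝ E]
    [NormedAddCommGroup F] [InnerProductSpace ℝ F]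
    (Γ : E → Set F) (x : E) (y : F) : Set (WithLp 2 (E × F)) :=
  {v | pl2 v (-1 : ℝ) ∈ limitingNC
    {q : WithLp 2 (WithLp 2 (E × F) × ℝ) |
      rhoD Γ (WithLp.equiv 2 (E × F) (WithLp.equiv 2 (WithLp 2 (E × F) × ℝ) q).1).1
        (WithLp.equiv 2 (E × F) (WithLp.equiv 2 (WithLp 2 (E × F) × ℝ) q).1).2 ≠ ⊤ ∧
      (rhoD Γ (WithLp.equiv 2 (E × F) (WithLp.equiv 2 (WithLp 2 (E × F) × ℝ) q).1).1
        (WithLp.equiv 2 (E × F) (WithLp.equiv 2 (WithLp 2 (E × F) × ℝ) q).1).2).toReal ≤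
        (WithLp.equiv 2 (WithLp 2 (E × F) × ℝ) q).2}
    (pl2 (pl2 x y) ((rhoD Γ x y).toReal))}


set_option linter.unusedSectionVars false

section Aux
variable {E F : Type*} [NormedAddCommGroup E] [InnerProductSpace ℝ E]
  [NormedAddCommGroup F] [InnerProductSpace ℝ F]

lemma norm_pl2_zero_right (a : E) : ‖pl2 a (0:F)‖ = ‖a‖ := by
  rw [pl2, WithLp.prod_norm_eq_of_L2]; simp

lemma norm_pl2_zero_left (b : F) : ‖pl2 (0:E) b‖ = ‖b‖ := by
  rw [pl2, WithLp.prod_norm_eq_of_L2]; simp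

lemma ofReal_norm_eq_coe_nnnorm {G : Type*} [SeminormedAddCommGroup G] (a : G) :
    ENNReal.ofReal ‖a‖ = (‖a‖₊ : ℝ≥0∞) :=
  ENNReal.ofReal_eq_coe_nnreal (norm_nonneg _)

lemma edist_eq_coe_nnnorm_sub {G : Type*} [SeminormedAddCommGroup G] (a b : G) :
    edist a b = (‖a - b‖₊ : ℝ≥0∞) := by
  rw [edist_dist, dist_eq_norm]; exact ofReal_norm_eq_coe_nnnorm _

lemma rhoD_eq_infEdist (Γ : E → Set F) (x : E) (y : F) :
    rhoD Γ x y = Metric.infEDist y (Γ x) := by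
  simp [rhoD, Metric.infEDist, edist_eq_coe_nnnorm_sub]

lemma gamma_closed {Γ : E → Set F} (h : IsClosed (svGraph Γ)) (x : E) :
    IsClosed (Γ x) := by
  have : Γ x = (fun z : F => pl2 x z) ⁻¹' (svGraph Γ) := rfl
  rw [this]
  exact h.preimage ((WithLp.prod_continuous_toLp 2 E F).comp
    (Continuous.prodMk_right x))

/-- Projection existence. -/
lemma exists_proj [ProperSpace F] {Γ : E → Set F} (h : IsClosed (svGraph Γ)) (x : E) (y : F)
    (hfin : rhoD Γ x y ≠ ⊤) :
    ∃ z ∈ Γ x, ‖y - z‖ = (rhoD Γ x y).toReal ∧ (‖y - z‖₊ : ℝ≥0∞) = rhoD Γ x y := by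
  have hne : (Γ x).Nonempty := by
    by_contra hc
    rw [Set.not_nonempty_iff_eq_empty] at hc
    rw [rhoD_eq_infEdist, Metric.infEdist_eq_top_iff.2 hc] at hfin
    exact hfin rfl
  obtain ⟨z, hz, hd⟩ := (gamma_closed h x).exists_infDist_eq_dist hne y
  refine ⟨z, hz, ?_, ?_⟩
  · rw [← dist_eq_norm, ← hd, Metric.infDist, rhoD_eq_infEdist]
  · rw [← ofReal_norm_eq_coe_nnnorm, ← dist_eq_norm, ← hd, Metric.infDist,
      rhoD_eq_infEdist, ENNReal.ofReal_toReal]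
    rw [rhoD_eq_infEdist] at hfin; exact hfin

/-- rhoD finite when Γ x nonempty. -/
lemma rhoD_ne_top {Γ : E → Set F} {x : E} (hne : (Γ x).Nonempty) (y : F) :
    rhoD Γ x y ≠ ⊤ := by
  rw [rhoD_eq_infEdist]
  exact Metric.infEdist_ne_top hne
end Aux

section Main
variable {E F : Type*} [NormedAddCommGroup E] [InnerProductSpace ℝ E]
  [NormedAddCommGroup F] [InnerProductSpace ℝ F]

/-- The epigraph-type set used in `limSubdiffRho`. -/
def epiS (Γ : E → Set F) : Set (WithLp 2 (WithLp 2 (E × F) × ℝ)) :=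
  {q | rhoD Γ (WithLp.equiv 2 (E × F) (WithLp.equiv 2 (WithLp 2 (E × F) × ℝ) q).1).1
        (WithLp.equiv 2 (E × F) (WithLp.equiv 2 (WithLp 2 (E × F) × ℝ) q).1).2 ≠ ⊤ ∧
      (rhoD Γ (WithLp.equiv 2 (E × F) (WithLp.equiv 2 (WithLp 2 (E × F) × ℝ) q).1).1
        (WithLp.equiv 2 (E × F) (WithLp.equiv 2 (WithLp 2 (E × F) × ℝ) q).1).2).toReal ≤
        (WithLp.equiv 2 (WithLp 2 (E × F) × ℝ) q).2}

/-- Lemma A: transfer a Fréchet normal to the epigraph at height `ρ` into a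
Fréchet normal to the graph at a projection point. -/
lemma frechet_transfer {Γ : E → Set F} {x : E} {y : F} {z : F}
    (hz : z ∈ Γ x) (hzp : (‖y - z‖₊ : ℝ≥0∞) = rhoD Γ x y)
    (hfin : rhoD Γ x y ≠ ⊤)
    {q : WithLp 2 (WithLp 2 (E × F) × ℝ)}
    (hq : q ∈ frechetNC (epiS Γ) (pl2 (pl2 x y) ((rhoD Γ x y).toReal))) :
    (WithLp.equiv 2 (WithLp 2 (E × F) × ℝ) q).1 ∈ frechetNC (svGraph Γ) (pl2 x z) := by
  obtain ⟨-, h2⟩ := hq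
  constructor
  · exact hz
  · intro ε hε
    obtain ⟨δ, hδ, hδ2⟩ := h2 ε hε
    refine ⟨δ, hδ, ?_⟩
    intro p hp hpd
    set x' : E := (WithLp.equiv 2 (E × F) p).1 with hx'
    set z' : F := (WithLp.equiv 2 (E × F) p).2 with hz'
    have hpz : p = pl2 x' z' := rfl
    have hz'mem : z' ∈ Γ x' := hp
    set r : ℝ := (rhoD Γ x y).toReal with hr
    set Q : WithLp 2 (WithLp 2 (E × F) × ℝ) := pl2 (pl2 x' (y + (z' - z))) r with hQ
    have hsub : Q - pl2 (pl2 x y) r = pl2 (p - pl2 x z) (0 : ℝ) := by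
      have e0 : Q - pl2 (pl2 x y) r = pl2 (pl2 (x' - x) (y + (z' - z) - y)) (r - r) := rfl
      have e1 : y + (z' - z) - y = z' - z := by abel
      have e2 : p - pl2 x z = pl2 (x' - x) (z' - z) := rfl
      rw [e0, e1, sub_self, e2]
    have hnormsub : ‖Q - pl2 (pl2 x y) r‖ = ‖p - pl2 x z‖ := by
      rw [hsub, norm_pl2_zero_right]
    have hinner : ⟪q, Q - pl2 (pl2 x y) r⟫ =
        ⟪(WithLp.equiv 2 (WithLp 2 (E × F) × ℝ) q).1, p - pl2 x z⟫ := by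
      rw [hsub]
      show ⟪q.ofLp.1, p - pl2 x z⟫ + ⟪q.ofLp.2, (0:ℝ)⟫ = _
      simp
    have hQmem : Q ∈ epiS Γ := by
      have hle : rhoD Γ x' (y + (z' - z)) ≤ rhoD Γ x y := by
        rw [← hzp]
        have := iInf₂_le (f := fun (w : F) (_ : w ∈ Γ x') => (‖(y + (z' - z)) - w‖₊ : ℝ≥0∞))
          z' hz'mem
        have e3 : (y + (z' - z)) - z' = y - z := by abel
        rw [e3] at this
        exact this
      constructor
      · exact fun hc => hfin (top_le_iff.1 (hc ▸ hle))
      · show (rhoD Γ x' (y + (z' - z))).toReal ≤ r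
        exact ENNReal.toReal_mono hfin hle
    have := hδ2 Q hQmem (by rw [hnormsub]; exact hpd)
    rw [hinner, hnormsub] at this
    exact this

/-- Lemma B: above the epigraph, Fréchet normals have nonnegative last component. -/
lemma frechet_vertical {Γ : E → Set F} {x : E} {y : F} {α : ℝ}
    (hfin : rhoD Γ x y ≠ ⊤) (hlt : (rhoD Γ x y).toReal < α)
    {q : WithLp 2 (WithLp 2 (E × F) × ℝ)}
    (hq : q ∈ frechetNC (epiS Γ) (pl2 (pl2 x y) α)) :
    0 ≤ (WithLp.equiv 2 (WithLp 2 (E × F) × ℝ) q).2 := by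
  obtain ⟨-, h2⟩ := hq
  set q2 : ℝ := (WithLp.equiv 2 (WithLp 2 (E × F) × ℝ) q).2 with hq2
  by_contra hc
  push_neg at hc
  have hε : (0:ℝ) < -q2 / 2 := by linarith
  obtain ⟨δ, hδ, hδ2⟩ := h2 (-q2/2) hε
  set s : ℝ := min (δ/2) (α - (rhoD Γ x y).toReal) with hs
  have hspos : 0 < s := lt_min (by linarith) (by linarith)
  set T : WithLp 2 (WithLp 2 (E × F) × ℝ) := pl2 (pl2 x y) (α - s) with hT
  have hsub : T - pl2 (pl2 x y) α = pl2 (0 : WithLp 2 (E × F)) (-s) := by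
    have e0 : T - pl2 (pl2 x y) α = pl2 (pl2 (x - x) (y - y)) (α - s - α) := rfl
    have e1 : α - s - α = -s := by ring
    rw [e0, e1, sub_self, sub_self]
    rfl
  have hTmem : T ∈ epiS Γ := by
    refine ⟨hfin, ?_⟩
    show (rhoD Γ x y).toReal ≤ α - s
    have : s ≤ α - (rhoD Γ x y).toReal := min_le_right _ _
    linarith
  have hnorm : ‖T - pl2 (pl2 x y) α‖ = s := by
    rw [hsub, norm_pl2_zero_left, Real.norm_eq_abs, abs_neg, abs_of_pos hspos]
  have hinner : ⟪q, T - pl2 (pl2 x y) α⟫ = q2 * (-s) := by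
    rw [hsub]
    show ⟪q.ofLp.1, (0 : WithLp 2 (E × F))⟫ + ⟪q.ofLp.2, -s⟫ = q2 * (-s)
    simp [RCLike.inner_apply]
    exact mul_comm _ _
  have := hδ2 T hTmem (by rw [hnorm]; linarith [min_le_left (δ/2) (α - (rhoD Γ x y).toReal)])
  rw [hinner, hnorm] at this
  nlinarith
end Main

section Thm
variable {E F : Type*} [NormedAddCommGroup E] [InnerProductSpace ℝ E]
  [NormedAddCommGroup F] [InnerProductSpace ℝ F] [ProperSpace F]

theorem main_thm (Γ : E → Set F) (hΓ : IsClosed (svGraph Γ))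
    (xb : E) (yb : F) (hne : (Γ xb).Nonempty)
    (v : WithLp 2 (E × F))
    (hv : pl2 v (-1 : ℝ) ∈ limitingNC (epiS Γ) (pl2 (pl2 xb yb) ((rhoD Γ xb yb).toReal))) :
    ∃ y : F, (y ∈ Γ xb ∧ (‖yb - y‖₊ : ℝ≥0∞) = rhoD Γ xb yb) ∧
      v ∈ limitingNC (svGraph Γ) (pl2 xb y) := by
  obtain ⟨qk, wk, hmem, hq, hwm, hwv⟩ := hv
  have hρbfin : rhoD Γ xb yb ≠ ⊤ := rhoD_ne_top hne yb
  -- component maps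
  set eB := WithLp.equiv 2 (WithLp 2 (E × F) × ℝ) with heB
  set eP := WithLp.equiv 2 (E × F) with heP
  set X : ℕ → E := fun k => (eP (eB (qk k)).1).1 with hX
  set Y : ℕ → F := fun k => (eP (eB (qk k)).1).2 with hY
  set Al : ℕ → ℝ := fun k => (eB (qk k)).2 with hAl
  set U : ℕ → WithLp 2 (E × F) := fun k => (eB (wk k)).1 with hU
  set T : ℕ → ℝ := fun k => (eB (wk k)).2 with hT
  -- continuity of component maps
  have cB1 : Continuous (fun q : WithLp 2 (WithLp 2 (E × F) × ℝ) => (eB q).1) :=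
    continuous_fst.comp (WithLp.prod_continuous_ofLp 2 _ _)
  have cB2 : Continuous (fun q : WithLp 2 (WithLp 2 (E × F) × ℝ) => (eB q).2) :=
    continuous_snd.comp (WithLp.prod_continuous_ofLp 2 _ _)
  have cP1 : Continuous (fun p : WithLp 2 (E × F) => (eP p).1) :=
    continuous_fst.comp (WithLp.prod_continuous_ofLp 2 _ _)
  have cP2 : Continuous (fun p : WithLp 2 (E × F) => (eP p).2) :=
    continuous_snd.comp (WithLp.prod_continuous_ofLp 2 _ _)
  -- convergence of components
  have hXc : Tendsto X atTop (𝓝 xb) := ((cP1.comp cB1).tendsto _).comp hq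
  have hYc : Tendsto Y atTop (𝓝 yb) := ((cP2.comp cB1).tendsto _).comp hq
  have hAlc : Tendsto Al atTop (𝓝 ((rhoD Γ xb yb).toReal)) := (cB2.tendsto _).comp hq
  have hUc : Tendsto U atTop (𝓝 v) := (cB1.tendsto _).comp hwv
  have hTc : Tendsto T atTop (𝓝 (-1 : ℝ)) := (cB2.tendsto _).comp hwv
  -- eventually T < 0
  have hTev : ∀ᶠ k in atTop, T k < 0 := hTc.eventually_lt_const (by norm_num)
  obtain ⟨K, hK⟩ := eventually_atTop.mp hTev
  -- membership facts
  have hfin : ∀ k, rhoD Γ (X k) (Y k) ≠ ⊤ := fun k => (hmem k).1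
  have hle : ∀ k, (rhoD Γ (X k) (Y k)).toReal ≤ Al k := fun k => (hmem k).2
  -- the base point of qk in pl2 form
  have hqk : ∀ k, qk k = pl2 (pl2 (X k) (Y k)) (Al k) := fun k => rfl
  -- eventually the epigraph point is on the graph of rho
  have heq : ∀ k, Al (k + K) = (rhoD Γ (X (k + K)) (Y (k + K))).toReal := by
    intro k
    rcases eq_or_lt_of_le (hle (k + K)) with h | h
    · exact h.symm
    · exfalso
      have h0 := frechet_vertical (hfin (k + K)) h ((hqk (k + K)) ▸ hwm (k + K))
      have := hK (k + K) (Nat.le_add_left K k)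
      rw [hT] at this
      exact absurd this (not_lt.mpr h0)
  -- projections
  have hproj : ∀ k, ∃ z ∈ Γ (X (k + K)), ‖Y (k + K) - z‖ =
      (rhoD Γ (X (k + K)) (Y (k + K))).toReal ∧
      (‖Y (k + K) - z‖₊ : ℝ≥0∞) = rhoD Γ (X (k + K)) (Y (k + K)) :=
    fun k => exists_proj hΓ _ _ (hfin (k + K))
  choose z hz1 hz2 hz3 using hproj
  -- Fréchet normals to the graph
  have hfn : ∀ k, U (k + K) ∈ frechetNC (svGraph Γ) (pl2 (X (k + K)) (z k)) := by
    intro k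
    have hb : qk (k + K) = pl2 (pl2 (X (k + K)) (Y (k + K)))
        ((rhoD Γ (X (k + K)) (Y (k + K))).toReal) := by
      rw [← heq k]; exact hqk _
    exact frechet_transfer (hz1 k) (hz3 k) (hfin (k + K)) (hb ▸ hwm (k + K))
  -- boundedness of z
  have hshift : Tendsto (fun k : ℕ => k + K) atTop atTop := tendsto_add_atTop_nat K
  have hg : Tendsto (fun k => ‖Y (k + K)‖ + Al (k + K)) atTop
      (𝓝 (‖yb‖ + (rhoD Γ xb yb).toReal)) :=
    ((hYc.comp hshift).norm).add (hAlc.comp hshift)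
  obtain ⟨R, hR⟩ := hg.isBoundedUnder_le.bddAbove_range
  have hzb : ∀ k, z k ∈ Metric.closedBall (0 : F) R := by
    intro k
    have h1 : ‖z k‖ ≤ ‖Y (k + K)‖ + ‖Y (k + K) - z k‖ := by
      have e : Y (k + K) - (Y (k + K) - z k) = z k := by abel
      have := norm_sub_le (Y (k + K)) (Y (k + K) - z k)
      rwa [e] at this
    have h2 : ‖Y (k + K) - z k‖ = Al (k + K) := by rw [hz2 k, heq k]
    have h3 : ‖Y (k + K)‖ + Al (k + K) ≤ R := hR ⟨k, rfl⟩
    simp only [Metric.mem_closedBall, dist_zero_right]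
    linarith
  obtain ⟨zl, -, φ, hφ, hzφ⟩ :=
    tendsto_subseq_of_bounded Metric.isBounded_closedBall hzb
  have hφt : Tendsto φ atTop atTop := hφ.tendsto_atTop
  -- limit point is on the graph
  have hXφ : Tendsto (fun j => X (φ j + K)) atTop (𝓝 xb) :=
    hXc.comp (hshift.comp hφt)
  have hYφ : Tendsto (fun j => Y (φ j + K)) atTop (𝓝 yb) :=
    hYc.comp (hshift.comp hφt)
  have hAlφ : Tendsto (fun j => Al (φ j + K)) atTop (𝓝 ((rhoD Γ xb yb).toReal)) :=
    hAlc.comp (hshift.comp hφt)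
  have hpt : Tendsto (fun j => pl2 (X (φ j + K)) (z (φ j))) atTop (𝓝 (pl2 xb zl)) := by
    have := (hXφ.prodMk_nhds hzφ)
    exact ((WithLp.prod_continuous_toLp 2 E F).tendsto _).comp this
  have hmemg : ∀ j, pl2 (X (φ j + K)) (z (φ j)) ∈ svGraph Γ := fun j => hz1 (φ j)
  have hzlΓ : pl2 xb zl ∈ svGraph Γ :=
    hΓ.mem_of_tendsto hpt (Eventually.of_forall hmemg)
  -- zl is a projection
  have hnorml : ‖yb - zl‖ = (rhoD Γ xb yb).toReal := by
    have h1 : Tendsto (fun j => ‖Y (φ j + K) - z (φ j)‖) atTop (𝓝 ‖yb - zl‖) :=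
      (hYφ.sub hzφ).norm
    have h2 : (fun j => ‖Y (φ j + K) - z (φ j)‖) = fun j => Al (φ j + K) := by
      funext j; rw [hz2 (φ j), heq (φ j)]
    rw [h2] at h1
    exact tendsto_nhds_unique h1 hAlφ
  have hcoe : (‖yb - zl‖₊ : ℝ≥0∞) = rhoD Γ xb yb := by
    rw [← ofReal_norm_eq_coe_nnnorm, hnorml, ENNReal.ofReal_toReal hρbfin]
  -- conclude
  refine ⟨zl, ⟨hzlΓ, hcoe⟩, ?_⟩
  refine ⟨fun j => pl2 (X (φ j + K)) (z (φ j)), fun j => U (φ j + K),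
    hmemg, hpt, fun j => hfn (φ j), ?_⟩
  exact hUc.comp (hshift.comp hφt)
end Thm


theorem rho_subdifferential_estimate (n l : ℕ)
    (Γ : EuclideanSpace ℝ (Fin n) → Set (EuclideanSpace ℝ (Fin l)))
    (hΓ : IsClosed (svGraph Γ))
    (xb : EuclideanSpace ℝ (Fin n)) (yb : EuclideanSpace ℝ (Fin l))
    (hne : (Γ xb).Nonempty) :
    limSubdiffRho Γ xb yb ⊆
      ⋃ y ∈ projSet Γ xb yb, limitingNC (svGraph Γ) (pl2 xb y) := by
  intro v hv
  obtain ⟨zl, hzl, hvn⟩ := main_thm Γ hΓ xb yb hne v hv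
  exact Set.mem_biUnion hzl hvn
end
end

section
/- Let x̄ ∈ M be a local minimizer of problem (P), i.e., x̄ minimizes f over M on some neighborhood of x̄. Then x̄ is an AM-stationary point of (P): there exist sequences {x_k},{ε_k} ⊆ ℝⁿ and {y_k},{λ_k} ⊆ ℝᵐ with x_k → x̄, ε_k → 0, y_k → 0 and ε_k ∈ ∂f(x_k) + D*Φ(x_k,y_k)(λ_k) for all k. -/
open Filter Topology RealInnerProductSpace
open scoped ENNReal NNReal

noncomputable section

section Helpers
variable {E F : Type*} [NormedAddCommGroup E] [InnerProductSpace ℝ E]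
  [NormedAddCommGroup F] [InnerProductSpace ℝ F]

lemma norm_pl2_sq (a : E) (b : F) : ‖pl2 a b‖^2 = ‖a‖^2 + ‖b‖^2 := by
  rw [← real_inner_self_eq_norm_sq, ← real_inner_self_eq_norm_sq, ← real_inner_self_eq_norm_sq]
  rfl

lemma norm_fst_le_pl2 (a : E) (b : F) : ‖a‖ ≤ ‖pl2 a b‖ := by
  have h := norm_pl2_sq a b
  nlinarith [norm_nonneg a, norm_nonneg b, norm_nonneg (pl2 a b)]

lemma norm_snd_le_pl2 (a : E) (b : F) : ‖b‖ ≤ ‖pl2 a b‖ := by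
  have h := norm_pl2_sq a b
  nlinarith [norm_nonneg a, norm_nonneg b, norm_nonneg (pl2 a b)]

lemma three_point (a b c : E) : ‖a - c‖^2 = ‖b - c‖^2 + 2*⟪b - c, a - b⟫ + ‖a - b‖^2 := by
  have h : a - c = (b - c) + (a - b) := by abel
  rw [h, norm_add_sq_real]

lemma mem_frechetNC_of_quad {A : Set E} {x v : E} {C δ₀ : ℝ} (hx : x ∈ A) (hC : 0 ≤ C) (hδ : 0 < δ₀)
    (h : ∀ y ∈ A, ‖y - x‖ < δ₀ → ⟪v, y - x⟫ ≤ C * ‖y - x‖^2) : v ∈ frechetNC A x := by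
  refine ⟨hx, fun ε hε => ⟨min δ₀ (ε/(C+1)), lt_min hδ (by positivity), fun y hy hyx => ?_⟩⟩
  have h1 := h y hy (lt_of_lt_of_le hyx (min_le_left _ _))
  have h2 : ‖y - x‖ < ε/(C+1) := lt_of_lt_of_le hyx (min_le_right _ _)
  have h3 : ‖y - x‖ * (C+1) < ε := (lt_div_iff₀ (by positivity)).1 h2
  have h4 := norm_nonneg (y - x)
  nlinarith

lemma frechetNC_subset_limitingNC {A : Set E} {x v : E} (h : v ∈ frechetNC A x) :
    v ∈ limitingNC A x :=
  ⟨fun _ => x, fun _ => v, fun _ => h.1, tendsto_const_nhds, fun _ => h, tendsto_const_nhds⟩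

/-- Fréchet subgradient property. -/
def FSub (f : E → ℝ) (x v : E) : Prop :=
  ∀ ε > 0, ∃ δ > 0, ∀ y, ‖y - x‖ < δ → ⟪v, y - x⟫ ≤ f y - f x + ε * ‖y - x‖

lemma FSub.norm_le {f : E → ℝ} {x v : E} {K : ℝ≥0} {s : Set E} {η : ℝ}
    (hfs : LipschitzOnWith K f s) (hball : Metric.ball x η ⊆ s) (hη : 0 < η)
    (h : FSub f x v) : ‖v‖ ≤ K := by
  rcases eq_or_ne v 0 with hv | hv
  · simp [hv]
  have hvpos : 0 < ‖v‖ := norm_pos_iff.2 hv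
  by_contra hlt
  push_neg at hlt
  set ε := (‖v‖ - K)/2 with hεdef
  have hε : 0 < ε := by simp only [hεdef]; linarith
  obtain ⟨δ, hδ, hd⟩ := h ε hε
  set t := min δ η / (2*‖v‖) with htdef
  have ht : 0 < t := by positivity
  set y := x + t • v with hydef
  have hyx : y - x = t • v := by simp [hydef]
  have hny : ‖y - x‖ = t * ‖v‖ := by
    rw [hyx, norm_smul, Real.norm_eq_abs, abs_of_pos ht]
  have hlt2 : ‖y - x‖ < min δ η := by
    rw [hny, htdef]
    have he : (min δ η) / (2*‖v‖) * ‖v‖ = (min δ η)/2 := by field_simp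
    rw [he]
    have hm := lt_min hδ hη
    linarith
  have hys : y ∈ s := hball (by
    simp only [Metric.mem_ball, dist_eq_norm]
    exact lt_of_lt_of_le hlt2 (min_le_right _ _))
  have hxs : x ∈ s := hball (Metric.mem_ball_self hη)
  have hlip : f y - f x ≤ K * ‖y - x‖ := by
    have := hfs.dist_le_mul y hys x hxs
    rw [Real.dist_eq, dist_eq_norm] at this
    calc f y - f x ≤ |f y - f x| := le_abs_self _
      _ ≤ K * ‖y - x‖ := this
  have hinner : ⟪v, y - x⟫ = t * ‖v‖^2 := by
    rw [hyx, real_inner_smul_right, real_inner_self_eq_norm_sq]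
  have hmain := hd y (lt_of_lt_of_le hlt2 (min_le_left _ _))
  rw [hinner, hny] at hmain
  have : t * ‖v‖ > 0 := by positivity
  nlinarith

lemma FSub.mem_frechet_epi {f : E → ℝ} {x v : E} (h : FSub f x v) :
    pl2 v (-1:ℝ) ∈ frechetNC
      {p : WithLp 2 (E × ℝ) | f (WithLp.equiv 2 (E × ℝ) p).1 ≤ (WithLp.equiv 2 (E × ℝ) p).2}
      (pl2 x (f x)) := by
  refine ⟨le_refl (f x), fun ε hε => ?_⟩
  obtain ⟨δ, hδ, hd⟩ := h ε hε
  refine ⟨δ, hδ, fun q hq hqn => ?_⟩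
  set qy := (WithLp.equiv 2 (E × ℝ) q).1 with hqy
  set qa := (WithLp.equiv 2 (E × ℝ) q).2 with hqa
  have hdiff : q - pl2 x (f x) = pl2 (qy - x) (qa - f x) := rfl
  have hinner : ⟪pl2 v (-1:ℝ), q - pl2 x (f x)⟫ = ⟪v, qy - x⟫ + (-1) * (qa - f x) := by
    rw [show ⟪pl2 v (-1:ℝ), q - pl2 x (f x)⟫ = ⟪v, qy - x⟫ + ⟪(-1:ℝ), qa - f x⟫ from rfl,
      RCLike.inner_apply']
    simp
  have h1 : ‖qy - x‖ ≤ ‖q - pl2 x (f x)‖ := by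
    rw [hdiff]; exact norm_fst_le_pl2 _ _
  have h2 := hd qy (lt_of_le_of_lt h1 hqn)
  have h3 : f qy ≤ qa := hq
  have h4 : ε * ‖qy - x‖ ≤ ε * ‖q - pl2 x (f x)‖ := by
    exact mul_le_mul_of_nonneg_left h1 (le_of_lt hε)
  rw [hinner]
  linarith

lemma tendsto_pl2 {u : ℕ → E} {w : ℕ → F} {a : E} {b : F}
    (hu : Tendsto u atTop (𝓝 a)) (hw : Tendsto w atTop (𝓝 b)) :
    Tendsto (fun i => pl2 (u i) (w i)) atTop (𝓝 (pl2 a b)) :=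
  ((WithLp.prodContinuousLinearEquiv 2 ℝ E F).symm.continuous.tendsto _).comp (hu.prodMk_nhds hw)

lemma tendsto_components {pq : ℕ → WithLp 2 (E × F)} {p : WithLp 2 (E × F)}
    (h : Tendsto pq atTop (𝓝 p)) :
    Tendsto (fun i => (WithLp.equiv 2 (E × F) (pq i)).1) atTop (𝓝 ((WithLp.equiv 2 (E × F) p).1)) ∧
    Tendsto (fun i => (WithLp.equiv 2 (E × F) (pq i)).2) atTop (𝓝 ((WithLp.equiv 2 (E × F) p).2)) := by
  have hc := ((WithLp.prodContinuousLinearEquiv 2 ℝ E F).continuous.tendsto p).comp h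
  exact ⟨(continuous_fst.tendsto _).comp hc, (continuous_snd.tendsto _).comp hc⟩

end Helpers


set_option maxHeartbeats 4000000 in
theorem aux_main {E F : Type*} [NormedAddCommGroup E] [InnerProductSpace ℝ E]
    [FiniteDimensional ℝ E] [NormedAddCommGroup F] [InnerProductSpace ℝ F]
    [FiniteDimensional ℝ F]
    (f : E → ℝ) (hf : LocallyLipschitz f)
    (Φ : E → Set F) (hΦ : IsClosed (svGraph Φ))
    (xb : E) (hfeas : 0 ∈ Φ xb)
    (hmin : IsLocalMinOn f {x | 0 ∈ Φ x} xb) :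
    ∃ (xk εk : ℕ → E) (yk lk : ℕ → F),
      Tendsto xk atTop (𝓝 xb) ∧ Tendsto εk atTop (𝓝 0) ∧ Tendsto yk atTop (𝓝 0) ∧
      ∀ k, ∃ a ∈ limSubdiff f (xk k), ∃ b ∈ coderiv Φ (xk k) (yk k) (lk k),
        εk k = a + b := by
  classical
  have hfc : Continuous f := hf.continuous
  obtain ⟨K, s, hs, hK⟩ := hf xb
  have hmin' : ∀ᶠ y in 𝓝 xb, y ∈ {x | 0 ∈ Φ x} → f xb ≤ f y :=
    eventually_nhdsWithin_iff.1 hmin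
  obtain ⟨ε₀, hε₀, hball⟩ := Metric.mem_nhds_iff.1 (inter_mem hs hmin')
  set r : ℝ := ε₀/2 with hrdef
  have hr : 0 < r := by positivity
  have hrball : Metric.closedBall xb r ⊆ Metric.ball xb ε₀ :=
    Metric.closedBall_subset_ball (by rw [hrdef]; linarith)
  have hrs : Metric.closedBall xb r ⊆ s := fun z hz => (hball (hrball hz)).1
  have hrmin : ∀ z ∈ Metric.closedBall xb r, 0 ∈ Φ z → f xb ≤ f z :=
    fun z hz h0 => (hball (hrball hz)).2 h0
  -- minimum of f on the ball
  have hcb : IsCompact (Metric.closedBall xb r) := isCompact_closedBall _ _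
  obtain ⟨z0, hz0b, hz0⟩ := hcb.exists_isMinOn ⟨xb, Metric.mem_closedBall_self hr.le⟩
    hfc.continuousOn
  set m0 : ℝ := f z0 with hm0def
  have hm0 : ∀ z ∈ Metric.closedBall xb r, m0 ≤ f z := fun z hz => isMinOn_iff.1 hz0 z hz
  have hm0xb : m0 ≤ f xb := hm0 xb (Metric.mem_closedBall_self hr.le)
  -- product space
  haveI : FiniteDimensional ℝ (WithLp 2 (E × F)) :=
    (WithLp.linearEquiv 2 ℝ (E × F)).symm.finiteDimensional
  have hc1 : Continuous (fun p : WithLp 2 (E × F) => (WithLp.equiv 2 (E × F) p).1) :=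
    continuous_fst.comp (WithLp.prodContinuousLinearEquiv 2 ℝ E F).continuous
  have hc2 : Continuous (fun p : WithLp 2 (E × F) => (WithLp.equiv 2 (E × F) p).2) :=
    continuous_snd.comp (WithLp.prodContinuousLinearEquiv 2 ℝ E F).continuous
  set p0 : WithLp 2 (E × F) := pl2 xb 0 with hp0def
  have hp0g : p0 ∈ svGraph Φ := hfeas
  set A : Set (WithLp 2 (E × F)) := svGraph Φ ∩ Metric.closedBall p0 (r/2) with hAdef
  have hAc : IsCompact A := (isCompact_closedBall p0 (r/2)).inter_left hΦ
  have hp0A : p0 ∈ A := ⟨hp0g, Metric.mem_closedBall_self (by positivity)⟩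
  set φfun : ℕ → WithLp 2 (E × F) → ℝ := fun k p =>
    f (WithLp.equiv 2 (E × F) p).1 + (k:ℝ)*‖(WithLp.equiv 2 (E × F) p).2‖^2
      + ‖(WithLp.equiv 2 (E × F) p).1 - xb‖^2 with hφdef
  have hφc : ∀ k, Continuous (φfun k) := by
    intro k
    exact ((hfc.comp hc1).add (continuous_const.mul ((hc2.norm).pow 2))).add
      (((hc1.sub continuous_const).norm).pow 2)
  have hminex : ∀ k : ℕ, ∃ p, p ∈ A ∧ ∀ q ∈ A, φfun k p ≤ φfun k q := by
    intro k
    obtain ⟨p, hpA, hp⟩ := hAc.exists_isMinOn ⟨p0, hp0A⟩ (hφc k).continuousOn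
    exact ⟨p, hpA, fun q hq => isMinOn_iff.1 hp q hq⟩
  choose pk hpkA hpkmin using hminex
  set xk : ℕ → E := fun k => (WithLp.equiv 2 (E × F) (pk k)).1 with hxkdef
  set yk : ℕ → F := fun k => (WithLp.equiv 2 (E × F) (pk k)).2 with hykdef
  have hφpk : ∀ k, φfun k (pk k) = f (xk k) + (k:ℝ)*‖yk k‖^2 + ‖xk k - xb‖^2 := fun k => rfl
  have hle : ∀ k, f (xk k) + (k:ℝ)*‖yk k‖^2 + ‖xk k - xb‖^2 ≤ f xb := by
    intro k
    have h2 : φfun k p0 = f xb := by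
      show f xb + (k:ℝ)*‖(0:F)‖^2 + ‖xb - xb‖^2 = f xb
      simp
    exact (hpkmin k p0 hp0A).trans h2.le
  have hpkdiff : ∀ k, pk k - p0 = pl2 (xk k - xb) (yk k - 0) := fun k => rfl
  have hpknorm : ∀ k, ‖pk k - p0‖ ≤ r/2 := by
    intro k
    have := (hpkA k).2
    rwa [Metric.mem_closedBall, dist_eq_norm] at this
  have hxkb : ∀ k, xk k ∈ Metric.closedBall xb r := by
    intro k
    have h1 : ‖xk k - xb‖ ≤ ‖pk k - p0‖ := by
      rw [hpkdiff k]; exact norm_fst_le_pl2 _ _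
    rw [Metric.mem_closedBall, dist_eq_norm]
    linarith [hpknorm k, hr]
  have hfm0 : ∀ k, m0 ≤ f (xk k) := fun k => hm0 _ (hxkb k)
  have hC0 : ∀ k : ℕ, (k:ℝ)*‖yk k‖^2 ≤ f xb - m0 := by
    intro k
    have h1 := hle k
    have h2 := hfm0 k
    nlinarith [sq_nonneg ‖xk k - xb‖]
  -- convergence of pk to p0
  have htendp : Tendsto pk atTop (𝓝 p0) := by
    apply tendsto_of_subseq_tendsto
    intro ns hns
    obtain ⟨q, hqA, ms, hms, hmt⟩ := hAc.tendsto_subseq (fun i => hpkA (ns i))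
    refine ⟨ms, ?_⟩
    suffices hq : q = p0 by rw [← hq]; exact hmt
    set qx := (WithLp.equiv 2 (E × F) q).1 with hqxdef
    set qy := (WithLp.equiv 2 (E × F) q).2 with hqydef
    have hcomp := tendsto_components (E := E) (F := F) hmt
    have hnm : Tendsto (fun i => ns (ms i)) atTop atTop := hns.comp hms.tendsto_atTop
    have hnmR : Tendsto (fun i => ((ns (ms i) : ℕ) : ℝ)) atTop atTop :=
      tendsto_natCast_atTop_atTop.comp hnm
    have hqy : qy = 0 := by
      by_contra hne
      have hpos : 0 < ‖qy‖^2 := pow_pos (norm_pos_iff.mpr hne) 2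
      have hsq : Tendsto (fun i => ‖yk (ns (ms i))‖^2) atTop (𝓝 (‖qy‖^2)) :=
        ((continuous_norm.pow 2).tendsto qy).comp hcomp.2
      have h1 : ∀ᶠ i in atTop, ‖qy‖^2/2 < ‖yk (ns (ms i))‖^2 :=
        hsq.eventually (eventually_gt_nhds (by linarith))
      have h2 : ∀ᶠ i in atTop, (f xb - m0)/(‖qy‖^2/2) < ((ns (ms i) : ℕ) : ℝ) :=
        hnmR.eventually_gt_atTop _
      obtain ⟨i, hi1, hi2⟩ := (h1.and h2).exists
      have h3 := hC0 (ns (ms i))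
      have hc : (0:ℝ) < ‖qy‖^2/2 := by linarith
      have h4 : ((f xb - m0)/(‖qy‖^2/2)) * (‖qy‖^2/2) = f xb - m0 :=
        div_mul_cancel₀ _ (ne_of_gt hc)
      have h5 : (0:ℝ) ≤ ((ns (ms i) : ℕ) : ℝ) := Nat.cast_nonneg _
      nlinarith
    have hqg : (0:F) ∈ Φ qx := by
      have := hqA.1
      rw [hqydef] at hqy
      show (0:F) ∈ Φ qx
      rw [← hqy]
      exact this
    have hqb : qx ∈ Metric.closedBall xb r := by
      have h1 : ‖qx - xb‖ ≤ ‖q - p0‖ := norm_fst_le_pl2 (qx - xb) (qy - 0)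
      have h2 : ‖q - p0‖ ≤ r/2 := by
        have := hqA.2
        rwa [Metric.mem_closedBall, dist_eq_norm] at this
      rw [Metric.mem_closedBall, dist_eq_norm]
      linarith
    have hq1 : f xb ≤ f qx := hrmin qx hqb hqg
    have hq2 : f qx + ‖qx - xb‖^2 ≤ f xb := by
      have hlim : Tendsto (fun i => f (xk (ns (ms i))) + ‖xk (ns (ms i)) - xb‖^2) atTop
          (𝓝 (f qx + ‖qx - xb‖^2)) := by
        have ht1 : Tendsto (fun i => xk (ns (ms i))) atTop (𝓝 qx) := hcomp.1
        exact ((hfc.tendsto qx).comp ht1).add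
          ((((continuous_norm.pow 2).comp (continuous_id.sub continuous_const)).tendsto qx).comp ht1)
      refine le_of_tendsto hlim (Eventually.of_forall fun i => ?_)
      have h1 := hle (ns (ms i))
      have h2 : (0:ℝ) ≤ ((ns (ms i):ℕ):ℝ) * ‖yk (ns (ms i))‖^2 := by positivity
      linarith
    have hqx : qx = xb := by
      have h0 : ‖qx - xb‖^2 = 0 := le_antisymm (by linarith) (by positivity)
      have h1 : ‖qx - xb‖ = 0 := by
        have := pow_eq_zero_iff (n := 2) (by norm_num) |>.1 h0
        exact this
      exact sub_eq_zero.1 (norm_eq_zero.1 h1)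
    have hqeq : q = pl2 qx qy := rfl
    rw [hqeq, hqx, hqy]
  -- the per-k key claim
  have key : ∀ k : ℕ, ‖pk k - p0‖ < r/8 →
      ∃ a ∈ limSubdiff f (xk k), ∃ l : F, ∃ b ∈ coderiv Φ (xk k) (yk k) l,
        a + b = (2:ℝ) • (xb - xk k) := by
    intro k hk
    have hρ : 0 < r/8 := by positivity
    set x₀ : E := xk k with hx0def
    set y₀ : F := yk k with hy0def
    set pc : WithLp 2 (E × F) := pk k with hpcdef
    have tri : ∀ (G : Type) (_ : NormedAddCommGroup G), True := fun _ _ => trivial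
    have triE : ∀ a b c : E, ‖a - c‖ ≤ ‖a - b‖ + ‖b - c‖ := fun a b c => by
      simpa [dist_eq_norm] using dist_triangle a b c
    have triP : ∀ a b c : WithLp 2 (E × F), ‖a - c‖ ≤ ‖a - b‖ + ‖b - c‖ := fun a b c => by
      simpa [dist_eq_norm] using dist_triangle a b c
    have hx0b : ‖x₀ - xb‖ < r/8 := lt_of_le_of_lt (by rw [hpkdiff k]; exact norm_fst_le_pl2 _ _) hk
    have hloc : ∀ q ∈ svGraph Φ, ‖q - pc‖ ≤ 2*(r/8) → φfun k pc ≤ φfun k q := by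
      intro q hqg hqn
      apply hpkmin k q
      refine ⟨hqg, ?_⟩
      rw [Metric.mem_closedBall, dist_eq_norm]
      have h1 := triP q pc p0
      linarith
    set D : Set (E × WithLp 2 (E × F)) :=
      Metric.closedBall x₀ (r/8) ×ˢ (svGraph Φ ∩ Metric.closedBall pc (r/8)) with hDdef
    have hDc : IsCompact D :=
      (isCompact_closedBall x₀ (r/8)).prod ((isCompact_closedBall pc (r/8)).inter_left hΦ)
    have hcD : (x₀, pc) ∈ D :=
      ⟨Metric.mem_closedBall_self hρ.le, (hpkA k).1, Metric.mem_closedBall_self hρ.le⟩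
    set Hfun : ℕ → E × WithLp 2 (E × F) → ℝ := fun j z =>
      f z.1 + (j:ℝ)*‖z.1 - (WithLp.equiv 2 (E × F) z.2).1‖^2
        + (k:ℝ)*‖(WithLp.equiv 2 (E × F) z.2).2‖^2
        + ‖(WithLp.equiv 2 (E × F) z.2).1 - xb‖^2
        + ‖z.1 - x₀‖^2 + ‖z.2 - pc‖^2 with hHdef
    have hHc : ∀ j : ℕ, Continuous (Hfun j) := by
      intro j
      have c1 : Continuous (fun z : E × WithLp 2 (E × F) => (WithLp.equiv 2 (E × F) z.2).1) :=
        hc1.comp continuous_snd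
      have c2 : Continuous (fun z : E × WithLp 2 (E × F) => (WithLp.equiv 2 (E × F) z.2).2) :=
        hc2.comp continuous_snd
      exact (((((hfc.comp continuous_fst).add
        (continuous_const.mul (((continuous_fst.sub c1).norm).pow 2))).add
        (continuous_const.mul ((c2.norm).pow 2))).add
        (((c1.sub continuous_const).norm).pow 2)).add
        (((continuous_fst.sub continuous_const).norm).pow 2)).add
        (((continuous_snd.sub continuous_const).norm).pow 2)
    have hminex2 : ∀ j : ℕ, ∃ z, z ∈ D ∧ ∀ w ∈ D, Hfun j z ≤ Hfun j w := by
      intro j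
      obtain ⟨z, hzD, hz⟩ := hDc.exists_isMinOn ⟨(x₀, pc), hcD⟩ (hHc j).continuousOn
      exact ⟨z, hzD, fun w hw => isMinOn_iff.1 hz w hw⟩
    choose zj hzjD hzjmin using hminex2
    set uj : ℕ → E := fun j => (zj j).1 with hujdef
    set qj : ℕ → WithLp 2 (E × F) := fun j => (zj j).2 with hqjdef
    set xj : ℕ → E := fun j => (WithLp.equiv 2 (E × F) (qj j)).1 with hxjdef
    set yj : ℕ → F := fun j => (WithLp.equiv 2 (E × F) (qj j)).2 with hyjdef
    set μ : ℝ := f x₀ + (k:ℝ)*‖y₀‖^2 + ‖x₀ - xb‖^2 with hμdef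
    have hHle : ∀ j : ℕ, Hfun j (zj j) ≤ μ := by
      intro j
      have h1 := hzjmin j (x₀, pc) hcD
      have h2 : Hfun j (x₀, pc) = μ := by
        show f x₀ + (j:ℝ)*‖x₀ - x₀‖^2 + (k:ℝ)*‖y₀‖^2 + ‖x₀ - xb‖^2 + ‖x₀ - x₀‖^2
          + ‖pc - pc‖^2 = μ
        simp [hμdef]
      exact h1.trans h2.le
    have hHrfl : ∀ j : ℕ, Hfun j (zj j) = f (uj j) + (j:ℝ)*‖uj j - xj j‖^2
        + (k:ℝ)*‖yj j‖^2 + ‖xj j - xb‖^2 + ‖uj j - x₀‖^2 + ‖qj j - pc‖^2 := fun j => rfl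
    have hqjg : ∀ j, qj j ∈ svGraph Φ := fun j => (hzjD j).2.1
    have hqjb : ∀ j, ‖qj j - pc‖ ≤ r/8 := fun j => by
      have := (hzjD j).2.2; rwa [Metric.mem_closedBall, dist_eq_norm] at this
    have hujn : ∀ j, ‖uj j - x₀‖ ≤ r/8 := fun j => by
      have := (hzjD j).1; rwa [Metric.mem_closedBall, dist_eq_norm] at this
    have hujr : ∀ j, uj j ∈ Metric.closedBall xb r := by
      intro j
      rw [Metric.mem_closedBall, dist_eq_norm]
      have h2 := triE (uj j) x₀ xb
      linarith [hujn j, hx0b, hr]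
    have hμm0 : ∀ j : ℕ, (j:ℝ)*‖uj j - xj j‖^2 ≤ μ - m0 := by
      intro j
      have h1 := hHle j
      rw [hHrfl j] at h1
      have h2 := hm0 _ (hujr j)
      have h3 : (0:ℝ) ≤ (k:ℝ)*‖yj j‖^2 := by positivity
      nlinarith [sq_nonneg ‖xj j - xb‖, sq_nonneg ‖uj j - x₀‖, sq_nonneg ‖qj j - pc‖]
    have htend2 : Tendsto zj atTop (𝓝 (x₀, pc)) := by
      apply tendsto_of_subseq_tendsto
      intro ns hns
      obtain ⟨w, hwD, ms, hms, hmt⟩ := hDc.tendsto_subseq (fun i => hzjD (ns i))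
      refine ⟨ms, ?_⟩
      suffices hw : w = (x₀, pc) by rw [← hw]; exact hmt
      have hmt1 : Tendsto (fun i => uj (ns (ms i))) atTop (𝓝 w.1) :=
        (continuous_fst.tendsto w).comp hmt
      have hmt2 : Tendsto (fun i => qj (ns (ms i))) atTop (𝓝 w.2) :=
        (continuous_snd.tendsto w).comp hmt
      have hcompw := tendsto_components (E := E) (F := F) hmt2
      set wu := w.1 with hwudef
      set wq := w.2 with hwqdef
      set wx := (WithLp.equiv 2 (E × F) wq).1 with hwxdef
      set wy := (WithLp.equiv 2 (E × F) wq).2 with hwydef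
      have hnm : Tendsto (fun i => ns (ms i)) atTop atTop := hns.comp hms.tendsto_atTop
      have hnmR : Tendsto (fun i => ((ns (ms i) : ℕ) : ℝ)) atTop atTop :=
        tendsto_natCast_atTop_atTop.comp hnm
      have hwux : wu = wx := by
        by_contra hne
        have hpos : 0 < ‖wu - wx‖^2 := pow_pos (norm_pos_iff.mpr (sub_ne_zero.mpr hne)) 2
        have hsq : Tendsto (fun i => ‖uj (ns (ms i)) - xj (ns (ms i))‖^2) atTop
            (𝓝 (‖wu - wx‖^2)) := ((continuous_norm.pow 2).tendsto _).comp (hmt1.sub hcompw.1)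
        have h1 : ∀ᶠ i in atTop, ‖wu - wx‖^2/2 < ‖uj (ns (ms i)) - xj (ns (ms i))‖^2 :=
          hsq.eventually (eventually_gt_nhds (by linarith))
        have h2 : ∀ᶠ i in atTop, (μ - m0)/(‖wu - wx‖^2/2) < ((ns (ms i) : ℕ) : ℝ) :=
          hnmR.eventually_gt_atTop _
        obtain ⟨i, hi1, hi2⟩ := (h1.and h2).exists
        have h3 := hμm0 (ns (ms i))
        have hc : (0:ℝ) < ‖wu - wx‖^2/2 := by linarith
        have h4 : ((μ - m0)/(‖wu - wx‖^2/2)) * (‖wu - wx‖^2/2) = μ - m0 :=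
          div_mul_cancel₀ _ (ne_of_gt hc)
        have h5 : (0:ℝ) ≤ ((ns (ms i) : ℕ) : ℝ) := Nat.cast_nonneg _
        nlinarith
      have hGlim : Tendsto (fun i => f (uj (ns (ms i))) + (k:ℝ)*‖yj (ns (ms i))‖^2
          + ‖xj (ns (ms i)) - xb‖^2 + ‖uj (ns (ms i)) - x₀‖^2 + ‖qj (ns (ms i)) - pc‖^2)
          atTop (𝓝 (f wu + (k:ℝ)*‖wy‖^2 + ‖wx - xb‖^2 + ‖wu - x₀‖^2 + ‖wq - pc‖^2)) := by
        have t1 : Tendsto (fun i => f (uj (ns (ms i)))) atTop (𝓝 (f wu)) :=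
          (hfc.tendsto wu).comp hmt1
        have t2 : Tendsto (fun i => (k:ℝ)*‖yj (ns (ms i))‖^2) atTop (𝓝 ((k:ℝ)*‖wy‖^2)) :=
          tendsto_const_nhds.mul (((continuous_norm.pow 2).tendsto wy).comp hcompw.2)
        have t3 : Tendsto (fun i => ‖xj (ns (ms i)) - xb‖^2) atTop (𝓝 (‖wx - xb‖^2)) :=
          ((continuous_norm.pow 2).tendsto _).comp (hcompw.1.sub tendsto_const_nhds)
        have t4 : Tendsto (fun i => ‖uj (ns (ms i)) - x₀‖^2) atTop (𝓝 (‖wu - x₀‖^2)) :=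
          ((continuous_norm.pow 2).tendsto _).comp (hmt1.sub tendsto_const_nhds)
        have t5 : Tendsto (fun i => ‖qj (ns (ms i)) - pc‖^2) atTop (𝓝 (‖wq - pc‖^2)) :=
          ((continuous_norm.pow 2).tendsto _).comp (hmt2.sub tendsto_const_nhds)
        exact (((t1.add t2).add t3).add t4).add t5
      have hGle : f wu + (k:ℝ)*‖wy‖^2 + ‖wx - xb‖^2 + ‖wu - x₀‖^2 + ‖wq - pc‖^2 ≤ μ := by
        refine le_of_tendsto hGlim (Eventually.of_forall fun i => ?_)
        have h1 := hHle (ns (ms i))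
        rw [hHrfl (ns (ms i))] at h1
        have h2 : (0:ℝ) ≤ ((ns (ms i):ℕ):ℝ)*‖uj (ns (ms i)) - xj (ns (ms i))‖^2 := by positivity
        linarith
      have hwqb : ‖wq - pc‖ ≤ r/8 := by
        have := hwD.2.2; rwa [Metric.mem_closedBall, dist_eq_norm] at this
      have hφpc : φfun k pc = μ := rfl
      have hφwq : φfun k wq = f wx + (k:ℝ)*‖wy‖^2 + ‖wx - xb‖^2 := rfl
      have hμle : μ ≤ f wx + (k:ℝ)*‖wy‖^2 + ‖wx - xb‖^2 := by
        rw [← hφpc, ← hφwq]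
        exact hloc wq hwD.2.1 (by linarith)
      rw [hwux] at hGle
      have hz1 : ‖wx - x₀‖^2 = 0 := le_antisymm (by nlinarith [sq_nonneg ‖wq - pc‖]) (by positivity)
      have hz2 : ‖wq - pc‖^2 = 0 := le_antisymm (by nlinarith [sq_nonneg ‖wx - x₀‖]) (by positivity)
      have hwx : wx = x₀ :=
        sub_eq_zero.1 (norm_eq_zero.1 (pow_eq_zero_iff (n := 2) (by norm_num) |>.1 hz1))
      have hwq' : wq = pc :=
        sub_eq_zero.1 (norm_eq_zero.1 (pow_eq_zero_iff (n := 2) (by norm_num) |>.1 hz2))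
      exact Prod.ext (hwux.trans hwx) hwq'
    have hev2 : ∀ᶠ j in atTop, ‖uj j - x₀‖ < r/8 ∧ ‖qj j - pc‖ < r/8 := by
      have h1 : Tendsto uj atTop (𝓝 x₀) := (continuous_fst.tendsto _).comp htend2
      have h2 : Tendsto qj atTop (𝓝 pc) := (continuous_snd.tendsto _).comp htend2
      have e1 : ∀ᶠ j in atTop, ‖uj j - x₀‖ < r/8 := by
        have := Metric.tendsto_nhds.1 h1 (r/8) hρ
        simpa [dist_eq_norm] using this
      have e2 : ∀ᶠ j in atTop, ‖qj j - pc‖ < r/8 := by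
        have := Metric.tendsto_nhds.1 h2 (r/8) hρ
        simpa [dist_eq_norm] using this
      exact e1.and e2
    obtain ⟨J, hJ⟩ := eventually_atTop.1 hev2
    set aj : ℕ → E := fun j => -((2*(j:ℝ)) • (uj j - xj j)) - (2:ℝ) • (uj j - x₀) with hajdef
    have haFS : ∀ j, J ≤ j → FSub f (uj j) (aj j) := by
      intro j hj ε hε
      obtain ⟨hju, hjq⟩ := hJ j hj
      refine ⟨min ((r/8) - ‖uj j - x₀‖) (ε/((j:ℝ)+2)), lt_min (by linarith) (by positivity),
        fun y hy => ?_⟩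
      have hy1 : ‖y - uj j‖ < (r/8) - ‖uj j - x₀‖ := lt_of_lt_of_le hy (min_le_left _ _)
      have hy2 : ‖y - uj j‖ < ε/((j:ℝ)+2) := lt_of_lt_of_le hy (min_le_right _ _)
      have hyD : (y, qj j) ∈ D := by
        refine ⟨?_, (hzjD j).2⟩
        rw [Metric.mem_closedBall, dist_eq_norm]
        have := triE y (uj j) x₀
        linarith
      have hmin2 := hzjmin j (y, qj j) hyD
      rw [hHrfl j] at hmin2
      have hR : Hfun j (y, qj j) = f y + (j:ℝ)*‖y - xj j‖^2 + (k:ℝ)*‖yj j‖^2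
          + ‖xj j - xb‖^2 + ‖y - x₀‖^2 + ‖qj j - pc‖^2 := rfl
      rw [hR] at hmin2
      have tp1 : ‖y - xj j‖^2 = ‖uj j - xj j‖^2 + 2*⟪uj j - xj j, y - uj j⟫ + ‖y - uj j‖^2 :=
        three_point y (uj j) (xj j)
      have tp1j : (j:ℝ)*‖y - xj j‖^2 = (j:ℝ)*‖uj j - xj j‖^2
          + (2*(j:ℝ))*⟪uj j - xj j, y - uj j⟫ + (j:ℝ)*‖y - uj j‖^2 := by rw [tp1]; ring
      have tp2 : ‖y - x₀‖^2 = ‖uj j - x₀‖^2 + 2*⟪uj j - x₀, y - uj j⟫ + ‖y - uj j‖^2 :=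
        three_point y (uj j) x₀
      have hia : ⟪aj j, y - uj j⟫ = -(2*(j:ℝ))*⟪uj j - xj j, y - uj j⟫
          - 2*⟪uj j - x₀, y - uj j⟫ := by
        simp only [hajdef, inner_sub_left, inner_neg_left, real_inner_smul_left]
        ring
      have hnn : (0:ℝ) ≤ ‖y - uj j‖ := norm_nonneg _
      have hj2 : ‖y - uj j‖ * ((j:ℝ)+2) ≤ ε := le_of_lt ((lt_div_iff₀ (by positivity)).1 hy2)
      have hj3 : ((j:ℝ)+2)*‖y - uj j‖^2 ≤ ε*‖y - uj j‖ := by nlinarith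
      have hjn : (0:ℝ) ≤ (j:ℝ) := Nat.cast_nonneg j
      rw [hia]
      nlinarith [sq_nonneg ‖y - uj j‖]
    set W1 : ℕ → E := fun j => (2*(j:ℝ)) • (uj j - xj j) + (2:ℝ) • (xb - xj j)
      + (2:ℝ) • (x₀ - xj j) with hW1def
    set W2 : ℕ → F := fun j => (-(2*(k:ℝ))) • yj j + (2:ℝ) • (y₀ - yj j) with hW2def
    have hwFN : ∀ j, J ≤ j → pl2 (W1 j) (W2 j) ∈ frechetNC (svGraph Φ) (qj j) := by
      intro j hj
      obtain ⟨hju, hjq⟩ := hJ j hj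
      refine mem_frechetNC_of_quad (hqjg j) (C := (j:ℝ)+(k:ℝ)+2) (by positivity)
        (δ₀ := (r/8) - ‖qj j - pc‖) (by linarith) ?_
      intro q hqg hqn
      set qx := (WithLp.equiv 2 (E × F) q).1 with hqxd
      set qy := (WithLp.equiv 2 (E × F) q).2 with hqyd
      have hqD : (uj j, q) ∈ D := by
        refine ⟨(hzjD j).1, hqg, ?_⟩
        rw [Metric.mem_closedBall, dist_eq_norm]
        have := triP q (qj j) pc
        linarith
      have hmin2 := hzjmin j (uj j, q) hqD
      rw [hHrfl j] at hmin2
      have hR : Hfun j (uj j, q) = f (uj j) + (j:ℝ)*‖uj j - qx‖^2 + (k:ℝ)*‖qy‖^2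
          + ‖qx - xb‖^2 + ‖uj j - x₀‖^2 + ‖q - pc‖^2 := rfl
      rw [hR] at hmin2
      rw [norm_sub_rev (uj j) (xj j), norm_sub_rev (uj j) qx] at hmin2
      have tp1 : ‖qx - uj j‖^2 = ‖xj j - uj j‖^2 + 2*⟪xj j - uj j, qx - xj j⟫
          + ‖qx - xj j‖^2 := three_point qx (xj j) (uj j)
      have tp1j : (j:ℝ)*‖qx - uj j‖^2 = (j:ℝ)*‖xj j - uj j‖^2
          + (2*(j:ℝ))*⟪xj j - uj j, qx - xj j⟫ + (j:ℝ)*‖qx - xj j‖^2 := by rw [tp1]; ring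
      have tp2 : ‖qy‖^2 = ‖yj j‖^2 + 2*⟪yj j, qy - yj j⟫ + ‖qy - yj j‖^2 := by
        have := three_point qy (yj j) (0:F)
        simpa using this
      have tp2k : (k:ℝ)*‖qy‖^2 = (k:ℝ)*‖yj j‖^2 + (2*(k:ℝ))*⟪yj j, qy - yj j⟫
          + (k:ℝ)*‖qy - yj j‖^2 := by rw [tp2]; ring
      have tp3 : ‖qx - xb‖^2 = ‖xj j - xb‖^2 + 2*⟪xj j - xb, qx - xj j⟫ + ‖qx - xj j‖^2 :=
        three_point qx (xj j) xb
      have tp4 : ‖q - pc‖^2 = ‖qj j - pc‖^2 + 2*⟪qj j - pc, q - qj j⟫ + ‖q - qj j‖^2 :=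
        three_point q (qj j) pc
      have hip : ⟪qj j - pc, q - qj j⟫ = ⟪xj j - x₀, qx - xj j⟫ + ⟪yj j - y₀, qy - yj j⟫ := rfl
      have hd : q - qj j = pl2 (qx - xj j) (qy - yj j) := rfl
      have hiw : ⟪pl2 (W1 j) (W2 j), q - qj j⟫ = -((2*(j:ℝ))*⟪xj j - uj j, qx - xj j⟫)
          - 2*⟪xj j - xb, qx - xj j⟫ - (2*(k:ℝ))*⟪yj j, qy - yj j⟫
          - 2*(⟪xj j - x₀, qx - xj j⟫ + ⟪yj j - y₀, qy - yj j⟫) := by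
        rw [hd]
        show ⟪W1 j, qx - xj j⟫ + ⟪W2 j, qy - yj j⟫ = _
        simp only [hW1def, hW2def, inner_add_left, inner_sub_left, real_inner_smul_left,
          inner_neg_left]
        ring
      have hq1 : ‖qx - xj j‖^2 ≤ ‖q - qj j‖^2 := by
        have h := norm_fst_le_pl2 (qx - xj j) (qy - yj j)
        rw [← hd] at h
        exact pow_le_pow_left₀ (norm_nonneg _) h 2
      have hq2 : ‖qy - yj j‖^2 ≤ ‖q - qj j‖^2 := by
        have h := norm_snd_le_pl2 (qx - xj j) (qy - yj j)
        rw [← hd] at h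
        exact pow_le_pow_left₀ (norm_nonneg _) h 2
      have hq1j : (j:ℝ)*‖qx - xj j‖^2 ≤ (j:ℝ)*‖q - qj j‖^2 :=
        mul_le_mul_of_nonneg_left hq1 (Nat.cast_nonneg j)
      have hq2k : (k:ℝ)*‖qy - yj j‖^2 ≤ (k:ℝ)*‖q - qj j‖^2 :=
        mul_le_mul_of_nonneg_left hq2 (Nat.cast_nonneg k)
      rw [hiw]
      linarith [hmin2, tp1j, tp2k, tp3, tp4, hip, hq1j, hq2k, hq1, hq2]
    have hanorm : ∀ j, J ≤ j → ‖aj j‖ ≤ (K:ℝ) := by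
      intro j hj
      refine (haFS j hj).norm_le (η := r/4) hK ?_ (by positivity)
      intro z hz
      apply hrs
      rw [Metric.mem_closedBall, dist_eq_norm]
      rw [Metric.mem_ball, dist_eq_norm] at hz
      have t1 := triE z (uj j) xb
      have t2 := triE (uj j) x₀ xb
      linarith [hujn j, hx0b]
    have hmem : ∀ i : ℕ, aj (i + J) ∈ Metric.closedBall (0:E) (K:ℝ) := by
      intro i
      rw [Metric.mem_closedBall, dist_zero_right]
      exact hanorm _ (Nat.le_add_left J i)
    obtain ⟨astar, hastar, ψ, hψ, hψt⟩ := (isCompact_closedBall (0:E) (K:ℝ)).tendsto_subseq hmem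
    set σ : ℕ → ℕ := fun i => ψ i + J with hσdef
    have hσJ : ∀ i, J ≤ σ i := fun i => Nat.le_add_left J (ψ i)
    have hσatTop : Tendsto σ atTop atTop :=
      (tendsto_add_atTop_nat J).comp hψ.tendsto_atTop
    have haσ : Tendsto (fun i => aj (σ i)) atTop (𝓝 astar) := hψt
    have hzσ : Tendsto (fun i => zj (σ i)) atTop (𝓝 (x₀, pc)) := htend2.comp hσatTop
    have huσ : Tendsto (fun i => uj (σ i)) atTop (𝓝 x₀) := (continuous_fst.tendsto _).comp hzσ
    have hqσ : Tendsto (fun i => qj (σ i)) atTop (𝓝 pc) := (continuous_snd.tendsto _).comp hzσ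
    have hcσ := tendsto_components (E := E) (F := F) hqσ
    have hxσ : Tendsto (fun i => xj (σ i)) atTop (𝓝 x₀) := hcσ.1
    have hyσ : Tendsto (fun i => yj (σ i)) atTop (𝓝 y₀) := hcσ.2
    have hamem : astar ∈ limSubdiff f x₀ := by
      refine ⟨fun i => pl2 (uj (σ i)) (f (uj (σ i))), fun i => pl2 (aj (σ i)) (-1:ℝ),
        fun i => le_refl (f (uj (σ i))), ?_, fun i => (haFS (σ i) (hσJ i)).mem_frechet_epi, ?_⟩
      · exact tendsto_pl2 huσ ((hfc.tendsto x₀).comp huσ)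
      · exact tendsto_pl2 haσ tendsto_const_nhds
    set lmul : F := (2*(k:ℝ)) • y₀ with hlmul
    set bstar : E := -astar + (2:ℝ) • (xb - x₀) with hbdef
    have hbmem : bstar ∈ coderiv Φ x₀ y₀ lmul := by
      refine ⟨fun i => qj (σ i), fun i => pl2 (W1 (σ i)) (W2 (σ i)), fun i => hqjg _, hqσ,
        fun i => hwFN (σ i) (hσJ i), ?_⟩
      have hW1eq : ∀ i, W1 (σ i) = -(aj (σ i)) - (2:ℝ) • (uj (σ i) - x₀)
          + (2:ℝ) • (xb - xj (σ i)) + (2:ℝ) • (x₀ - xj (σ i)) := by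
        intro i
        simp only [hW1def, hajdef]
        module
      have hW1t : Tendsto (fun i => W1 (σ i)) atTop (𝓝 (-astar + (2:ℝ) • (xb - x₀))) := by
        have h1 : Tendsto (fun i => -(aj (σ i)) - (2:ℝ) • (uj (σ i) - x₀)
            + (2:ℝ) • (xb - xj (σ i)) + (2:ℝ) • (x₀ - xj (σ i))) atTop
            (𝓝 (-astar - (2:ℝ) • (x₀ - x₀) + (2:ℝ) • (xb - x₀) + (2:ℝ) • (x₀ - x₀))) :=
          (((haσ.neg).sub ((huσ.sub tendsto_const_nhds).const_smul _)).add
            ((tendsto_const_nhds.sub hxσ).const_smul _)).add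
            ((tendsto_const_nhds.sub hxσ).const_smul _)
        have h2 : -astar - (2:ℝ) • ((x₀:E) - x₀) + (2:ℝ) • (xb - x₀) + (2:ℝ) • ((x₀:E) - x₀)
            = -astar + (2:ℝ) • (xb - x₀) := by
          simp
        rw [h2] at h1
        exact h1.congr fun i => (hW1eq i).symm
      have hW2t : Tendsto (fun i => W2 (σ i)) atTop (𝓝 ((-(2*(k:ℝ))) • y₀)) := by
        have h1 : Tendsto (fun i => (-(2*(k:ℝ))) • yj (σ i) + (2:ℝ) • (y₀ - yj (σ i))) atTop
            (𝓝 ((-(2*(k:ℝ))) • y₀ + (2:ℝ) • (y₀ - y₀))) :=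
          (hyσ.const_smul _).add ((tendsto_const_nhds.sub hyσ).const_smul _)
        simp only [sub_self, smul_zero, add_zero] at h1
        exact h1
      have hfinal := tendsto_pl2 hW1t hW2t
      have he : pl2 (-astar + (2:ℝ) • (xb - x₀)) ((-(2*(k:ℝ))) • y₀) = pl2 bstar (-lmul) := by
        rw [hbdef, hlmul, neg_smul]
      rw [he] at hfinal
      exact hfinal
    refine ⟨astar, hamem, lmul, bstar, hbmem, ?_⟩
    rw [hbdef]
    abel
  -- eventually close
  have hev : ∀ᶠ k in atTop, ‖pk k - p0‖ < r/8 := by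
    have := Metric.tendsto_nhds.1 htendp (r/8) (by positivity)
    simpa [dist_eq_norm] using this
  obtain ⟨N, hN⟩ := eventually_atTop.1 hev
  have key' : ∀ i : ℕ, ∃ a ∈ limSubdiff f (xk (i+N)), ∃ l : F,
      ∃ b ∈ coderiv Φ (xk (i+N)) (yk (i+N)) l, a + b = (2:ℝ) • (xb - xk (i+N)) :=
    fun i => key (i+N) (hN (i+N) (Nat.le_add_left N i))
  choose a ha l b hb hab using key'
  have htshift : Tendsto (fun i => pk (i+N)) atTop (𝓝 p0) :=
    htendp.comp (tendsto_add_atTop_nat N)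
  have hcs := tendsto_components (E := E) (F := F) htshift
  refine ⟨fun i => xk (i+N), fun i => a i + b i, fun i => yk (i+N), l, ?_, ?_, ?_, ?_⟩
  · exact hcs.1
  · have : Tendsto (fun i => (2:ℝ) • (xb - xk (i+N))) atTop (𝓝 ((2:ℝ) • (xb - xb))) :=
      (tendsto_const_nhds.sub hcs.1).const_smul (2:ℝ)
    simp only [sub_self, smul_zero] at this
    refine this.congr fun i => (hab i).symm
  · exact hcs.2
  · intro i
    exact ⟨a i, ha i, b i, hb i, rfl⟩


theorem local_minimizer_is_AM_stationary (n m : ℕ)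
    (f : EuclideanSpace ℝ (Fin n) → ℝ) (hf : LocallyLipschitz f)
    (Φ : EuclideanSpace ℝ (Fin n) → Set (EuclideanSpace ℝ (Fin m)))
    (hΦ : IsClosed (svGraph Φ))
    (xb : EuclideanSpace ℝ (Fin n)) (hfeas : 0 ∈ Φ xb)
    (hmin : IsLocalMinOn f {x | 0 ∈ Φ x} xb) :
    ∃ (xk εk : ℕ → EuclideanSpace ℝ (Fin n)) (yk lk : ℕ → EuclideanSpace ℝ (Fin m)),
      Tendsto xk atTop (𝓝 xb) ∧ Tendsto εk atTop (𝓝 0) ∧ Tendsto yk atTop (𝓝 0) ∧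
      ∀ k, ∃ a ∈ limSubdiff f (xk k), ∃ b ∈ coderiv Φ (xk k) (yk k) (lk k),
        εk k = a + b :=
  aux_main f hf Φ hΦ xb hfeas hmin
end
end

section
/- Let x̄ ∈ M be an AM-stationary point of (P). Then ∂f(x̄) ∩ (−Limsup_{x→x̄, y→0} 𝓜(x,y)) ≠ ∅. -/
open Filter Topology RealInnerProductSpace
open scoped ENNReal NNReal

noncomputable section

section MyHelpers
variable {E F : Type*} [NormedAddCommGroup E] [InnerProductSpace ℝ E]
  [NormedAddCommGroup F] [InnerProductSpace ℝ F]

lemma my_norm_pl2_le (a : E) (b : F) : ‖pl2 a b‖ ≤ ‖a‖ + ‖b‖ := by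
  rw [show ‖pl2 a b‖ = Real.sqrt (‖a‖^2 + ‖b‖^2) from WithLp.prod_norm_eq_of_L2 _]
  rw [show ‖a‖ + ‖b‖ = Real.sqrt ((‖a‖+‖b‖)^2) from (Real.sqrt_sq (by positivity)).symm]
  apply Real.sqrt_le_sqrt; nlinarith [norm_nonneg a, norm_nonneg b]

lemma my_tendsto_pl2 {u : ℕ → E} {v : ℕ → F} {x : E} {y : F} (hu : Tendsto u atTop (𝓝 x))
    (hv : Tendsto v atTop (𝓝 y)) :
    Tendsto (fun k => pl2 (u k) (v k)) atTop (𝓝 (pl2 x y)) := by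
  have hc : Continuous fun p : E × F => ((WithLp.equiv 2 (E × F)).symm p) :=
    (WithLp.prodContinuousLinearEquiv 2 ℝ E F).symm.continuous
  exact (hc.tendsto _).comp (hu.prodMk_nhds hv)

lemma my_tendsto_pl2_fst {q : ℕ → WithLp 2 (E × F)} {p : WithLp 2 (E × F)}
    (h : Tendsto q atTop (𝓝 p)) : Tendsto (fun k => (q k).fst) atTop (𝓝 p.fst) := by
  have hc : Continuous fun z : WithLp 2 (E × F) => z.fst :=
    continuous_fst.comp (WithLp.prodContinuousLinearEquiv 2 ℝ E F).continuous
  exact (hc.tendsto _).comp h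

lemma my_tendsto_pl2_snd {q : ℕ → WithLp 2 (E × F)} {p : WithLp 2 (E × F)}
    (h : Tendsto q atTop (𝓝 p)) : Tendsto (fun k => (q k).snd) atTop (𝓝 p.snd) := by
  have hc : Continuous fun z : WithLp 2 (E × F) => z.snd :=
    continuous_snd.comp (WithLp.prodContinuousLinearEquiv 2 ℝ E F).continuous
  exact (hc.tendsto _).comp h

/-- Elements of the limiting subdifferential at a point whose `r`-ball lies inside a
`K`-Lipschitz region of `f` have norm at most `K`. -/
lemma my_norm_le_of_mem_limSubdiff {f : E → ℝ} {K : ℝ≥0} {s : Set E}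
    (hK : LipschitzOnWith K f s) {x : E} {r : ℝ} (hr : 0 < r)
    (hball : Metric.ball x r ⊆ s) {a : E} (ha : a ∈ limSubdiff f x) : ‖a‖ ≤ K := by
  obtain ⟨q, nv, hqmem, hqten, hnv, hnten⟩ := ha
  have hu : Tendsto (fun k => (q k).fst) atTop (𝓝 x) := my_tendsto_pl2_fst hqten
  have hw : Tendsto (fun k => (nv k).fst) atTop (𝓝 a) := my_tendsto_pl2_fst hnten
  have hbt : Tendsto (fun k => (nv k).snd) atTop (𝓝 (-1 : ℝ)) := my_tendsto_pl2_snd hnten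
  have hev : ∀ᶠ k in atTop, (q k).fst ∈ Metric.ball x (r/2) :=
    hu (Metric.ball_mem_nhds x (by linarith))
  have key : ∀ k, (q k).fst ∈ Metric.ball x (r/2) → ‖(nv k).fst‖ ≤ |(nv k).snd| * K := by
    intro k hk
    set u := (q k).fst with hudef
    set l := (q k).snd with hadef
    set w := (nv k).fst with hwdef
    set c := (nv k).snd with hbdef
    obtain ⟨hqA, hfr⟩ := hnv k
    have hfu : f u ≤ l := hqA
    rcases eq_or_ne w 0 with h0 | h0
    · rw [h0]; simp only [norm_zero]; positivity
    have hwpos : (0:ℝ) < ‖w‖ := norm_pos_iff.mpr h0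
    apply le_of_forall_pos_le_add
    intro ε hε
    have hK1 : (0:ℝ) < 1 + K := by positivity
    obtain ⟨δ, hδ, hprop⟩ := hfr (ε / (1 + K)) (by positivity)
    set ρ : ℝ := min (δ / (1 + K)) (r/2) / 2 with hρdef
    have hmin : 0 < min (δ / (1 + (K:ℝ))) (r/2) := lt_min (div_pos hδ hK1) (by linarith)
    have hρpos : 0 < ρ := by rw [hρdef]; linarith
    have hρδ : ρ < δ / (1 + (K:ℝ)) := by
      have h1 := min_le_left (δ / (1 + (K:ℝ))) (r/2)
      rw [hρdef]; linarith
    have hρr : ρ < r/2 := by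
      have h1 := min_le_right (δ / (1 + (K:ℝ))) (r/2)
      rw [hρdef]; linarith
    set h : E := (ρ / ‖w‖) • w with hhdef
    have hnormh : ‖h‖ = ρ := by
      rw [hhdef, norm_smul, Real.norm_eq_abs, abs_of_pos (by positivity)]
      field_simp
    have hus : u ∈ s := hball (Metric.mem_ball.mpr (by
      have := Metric.mem_ball.mp hk; linarith [dist_nonneg (x := u) (y := x)]))
    have huhs : u + h ∈ s := by
      apply hball
      rw [Metric.mem_ball]
      calc dist (u + h) x ≤ dist (u+h) u + dist u x := dist_triangle _ _ _
        _ < r/2 + r/2 := by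
            apply add_lt_add_of_le_of_lt _ (Metric.mem_ball.mp hk)
            rw [dist_eq_norm, add_sub_cancel_left, hnormh]; linarith
        _ = r := by ring
    set D : ℝ := f (u + h) - f u with hDdef
    have hDle : |D| ≤ K * ‖h‖ := by
      have := hK.dist_le_mul (u+h) huhs u hus
      rw [dist_eq_norm, dist_eq_norm, add_sub_cancel_left] at this
      simpa [hDdef, Real.norm_eq_abs] using this
    set y : WithLp 2 (E × ℝ) := pl2 (u + h) (l + D) with hydef
    have hyA : y ∈ {p : WithLp 2 (E × ℝ) |
        f (WithLp.equiv 2 (E × ℝ) p).1 ≤ (WithLp.equiv 2 (E × ℝ) p).2} := by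
      show f (u + h) ≤ l + D
      rw [hDdef]; linarith
    have hsub : y - q k = pl2 h D := by
      have hqk : q k = pl2 u l := rfl
      rw [hydef, hqk]
      show pl2 ((u+h) - u) ((l + D) - l) = pl2 h D
      rw [add_sub_cancel_left, add_sub_cancel_left]
    have hyq : ‖y - q k‖ ≤ (1 + K) * ρ := by
      rw [hsub]
      calc ‖pl2 h D‖ ≤ ‖h‖ + ‖D‖ := my_norm_pl2_le _ _
        _ ≤ ρ + K * ρ := by
            rw [hnormh]; rw [hnormh] at hDle
            exact add_le_add le_rfl (by simpa [Real.norm_eq_abs] using hDle)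
        _ = (1 + K) * ρ := by ring
    have hyqδ : ‖y - q k‖ < δ := by
      calc ‖y - q k‖ ≤ (1+K) * ρ := hyq
        _ < (1+K) * (δ / (1+K)) := mul_lt_mul_of_pos_left hρδ hK1
        _ = δ := by field_simp
    have hip := hprop y hyA hyqδ
    rw [hsub] at hip
    have hinner : ⟪nv k, pl2 h D⟫ = ⟪w, h⟫ + c * D := by
      have hnvk : nv k = pl2 w c := rfl
      rw [hnvk]
      show ⟪w, h⟫ + ⟪c, D⟫ = ⟪w, h⟫ + c * D
      simp [RCLike.inner_apply]; ring
    have hwh : ⟪w, h⟫ = ρ * ‖w‖ := by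
      rw [hhdef, real_inner_smul_right, real_inner_self_eq_norm_sq]
      field_simp
    rw [hinner, hwh] at hip
    have hcD : -(c * D) ≤ |c| * (K * ρ) := by
      calc -(c * D) ≤ |c * D| := neg_le_abs _
        _ = |c| * |D| := abs_mul _ _
        _ ≤ |c| * (K * ρ) := by
            apply mul_le_mul_of_nonneg_left _ (abs_nonneg _)
            rw [hnormh] at hDle; exact hDle
    have hrhs : ε / (1 + K) * ‖pl2 h D‖ ≤ ε * ρ := by
      calc ε / (1+K) * ‖pl2 h D‖ ≤ ε / (1+K) * ((1+K) * ρ) := by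
            apply mul_le_mul_of_nonneg_left _ (by positivity)
            calc ‖pl2 h D‖ = ‖y - q k‖ := by rw [hsub]
              _ ≤ (1+K)*ρ := hyq
        _ = ε * ρ := by field_simp
    have t1 : ρ * ‖w‖ + c * D ≤ ε * ρ := le_trans hip hrhs
    have hfin : ρ * ‖w‖ ≤ |c| * (K * ρ) + ε * ρ := by linarith [t1, hcD]
    have hre : |c| * ((K:ℝ) * ρ) + ε * ρ = ρ * (|c| * K + ε) := by ring
    rw [hre] at hfin
    have := (mul_le_mul_iff_right₀ hρpos).mp hfin
    linarith
  have hevle : ∀ᶠ k in atTop, ‖(nv k).fst‖ ≤ |(nv k).snd| * K := hev.mono key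
  have h1 : Tendsto (fun k => ‖(nv k).fst‖) atTop (𝓝 ‖a‖) := hw.norm
  have h2 : Tendsto (fun k => |(nv k).snd| * (K:ℝ)) atTop (𝓝 (|(-1:ℝ)| * K)) :=
    (hbt.abs).mul_const _
  have := le_of_tendsto_of_tendsto h1 h2 hevle
  simpa using this

end MyHelpers

theorem AM_stationary_subdiff_meets_neg_Limsup (n m : ℕ)
    (f : EuclideanSpace ℝ (Fin n) → ℝ) (hf : LocallyLipschitz f)
    (Φ : EuclideanSpace ℝ (Fin n) → Set (EuclideanSpace ℝ (Fin m)))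
    (hΦ : IsClosed (svGraph Φ))
    (xb : EuclideanSpace ℝ (Fin n)) (hfeas : 0 ∈ Φ xb)
    (hAM : ∃ (xk εk : ℕ → EuclideanSpace ℝ (Fin n)) (yk lk : ℕ → EuclideanSpace ℝ (Fin m)),
      Tendsto xk atTop (𝓝 xb) ∧ Tendsto εk atTop (𝓝 0) ∧ Tendsto yk atTop (𝓝 0) ∧
      ∀ k, ∃ a ∈ limSubdiff f (xk k), ∃ b ∈ coderiv Φ (xk k) (yk k) (lk k),
        εk k = a + b) :
    ∃ v ∈ limSubdiff f xb, -v ∈ MmapLimsup Φ xb := by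
  classical
  obtain ⟨xk, εk, yk, lk, hxk, hεk, hyk, hseq⟩ := hAM
  choose a ha b hb hab using hseq
  obtain ⟨K, t, ht, hK⟩ := hf xb
  obtain ⟨r, hr, hballt⟩ := Metric.mem_nhds_iff.mp ht
  have hevx : ∀ᶠ k in atTop, xk k ∈ Metric.ball xb (r/2) :=
    hxk (Metric.ball_mem_nhds xb (by linarith))
  obtain ⟨N, hN⟩ := eventually_atTop.mp hevx
  have hbound : ∀ k, N ≤ k → ‖a k‖ ≤ K := by
    intro k hk
    refine my_norm_le_of_mem_limSubdiff hK (r := r/2) (by linarith) ?_ (ha k)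
    intro z hz
    apply hballt
    rw [Metric.mem_ball] at hz ⊢
    calc dist z xb ≤ dist z (xk k) + dist (xk k) xb := dist_triangle _ _ _
      _ < r/2 + r/2 := add_lt_add hz (Metric.mem_ball.mp (hN k hk))
      _ = r := by ring
  have hmem : ∀ j : ℕ, a (j + N) ∈ Metric.closedBall (0 : EuclideanSpace ℝ (Fin n)) K := by
    intro j
    rw [Metric.mem_closedBall, dist_zero_right]
    exact hbound _ (Nat.le_add_left N j)
  obtain ⟨v, hvmem, φ, hφ, hconv⟩ :=
    (isCompact_closedBall (0 : EuclideanSpace ℝ (Fin n)) (K:ℝ)).tendsto_subseq hmem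
  set ψ : ℕ → ℕ := fun j => φ j + N with hψdef
  have hψ : Tendsto ψ atTop atTop :=
    tendsto_atTop_mono (fun j => Nat.le_add_right (φ j) N) hφ.tendsto_atTop
  have haψ : Tendsto (fun j => a (ψ j)) atTop (𝓝 v) := hconv
  have hxψ : Tendsto (fun j => xk (ψ j)) atTop (𝓝 xb) := hxk.comp hψ
  have hεψ : Tendsto (fun j => εk (ψ j)) atTop (𝓝 0) := hεk.comp hψ
  have hyψ : Tendsto (fun j => yk (ψ j)) atTop (𝓝 0) := hyk.comp hψ
  have hbψ : Tendsto (fun j => b (ψ j)) atTop (𝓝 (-v)) := by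
    have heq : (fun j => b (ψ j)) = fun j => εk (ψ j) - a (ψ j) := by
      funext j; rw [hab (ψ j)]; abel
    rw [heq]
    simpa using hεψ.sub haψ
  refine ⟨v, ?_, ?_⟩
  · -- v ∈ limSubdiff f xb, via a diagonal argument
    have hone : Tendsto (fun j : ℕ => (1:ℝ)/(j+1)) atTop (𝓝 0) :=
      tendsto_one_div_add_atTop_nhds_zero_nat
    set A := {p : WithLp 2 (EuclideanSpace ℝ (Fin n) × ℝ) |
      f (WithLp.equiv 2 (EuclideanSpace ℝ (Fin n) × ℝ) p).1 ≤
        (WithLp.equiv 2 (EuclideanSpace ℝ (Fin n) × ℝ) p).2} with hAdef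
    have hsel : ∀ j : ℕ, ∃ Q NV : WithLp 2 (EuclideanSpace ℝ (Fin n) × ℝ),
        Q ∈ A ∧ NV ∈ frechetNC A Q ∧
        dist Q (pl2 (xk (ψ j)) (f (xk (ψ j)))) < 1/(j+1) ∧
        dist NV (pl2 (a (ψ j)) (-1 : ℝ)) < 1/(j+1) := by
      intro j
      obtain ⟨q, nv, hq1, hq2, hq3, hq4⟩ := ha (ψ j)
      have hpos : (0:ℝ) < 1/(j+1) := by positivity
      have e1 : ∀ᶠ i in atTop, dist (q i) (pl2 (xk (ψ j)) (f (xk (ψ j)))) < 1/(j+1) :=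
        hq2 (Metric.ball_mem_nhds _ hpos)
      have e2 : ∀ᶠ i in atTop, dist (nv i) (pl2 (a (ψ j)) (-1 : ℝ)) < 1/(j+1) :=
        hq4 (Metric.ball_mem_nhds _ hpos)
      obtain ⟨i, hi1, hi2⟩ := (e1.and e2).exists
      exact ⟨q i, nv i, hq1 i, hq3 i, hi1, hi2⟩
    choose Q NV hQmem hNVmem hQd hNVd using hsel
    have hcen : Tendsto (fun j => pl2 (xk (ψ j)) (f (xk (ψ j)))) atTop
        (𝓝 (pl2 xb (f xb))) :=
      my_tendsto_pl2 hxψ ((hf.continuous.tendsto xb).comp hxψ)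
    have hQten : Tendsto Q atTop (𝓝 (pl2 xb (f xb))) := by
      rw [tendsto_iff_dist_tendsto_zero]
      apply squeeze_zero (fun j => dist_nonneg)
        (g := fun j => 1/(j+1) + dist (pl2 (xk (ψ j)) (f (xk (ψ j)))) (pl2 xb (f xb)))
      · intro j
        calc dist (Q j) (pl2 xb (f xb))
            ≤ dist (Q j) (pl2 (xk (ψ j)) (f (xk (ψ j)))) +
              dist (pl2 (xk (ψ j)) (f (xk (ψ j)))) (pl2 xb (f xb)) := dist_triangle _ _ _
          _ ≤ 1/(j+1) + dist (pl2 (xk (ψ j)) (f (xk (ψ j)))) (pl2 xb (f xb)) :=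
              add_le_add (le_of_lt (hQd j)) le_rfl
      · simpa using hone.add (tendsto_iff_dist_tendsto_zero.mp hcen)
    have hcen2 : Tendsto (fun j => pl2 (a (ψ j)) (-1 : ℝ)) atTop (𝓝 (pl2 v (-1 : ℝ))) :=
      my_tendsto_pl2 haψ tendsto_const_nhds
    have hNVten : Tendsto NV atTop (𝓝 (pl2 v (-1 : ℝ))) := by
      rw [tendsto_iff_dist_tendsto_zero]
      apply squeeze_zero (fun j => dist_nonneg)
        (g := fun j => 1/(j+1) + dist (pl2 (a (ψ j)) (-1 : ℝ)) (pl2 v (-1 : ℝ)))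
      · intro j
        calc dist (NV j) (pl2 v (-1 : ℝ))
            ≤ dist (NV j) (pl2 (a (ψ j)) (-1 : ℝ)) +
              dist (pl2 (a (ψ j)) (-1 : ℝ)) (pl2 v (-1 : ℝ)) := dist_triangle _ _ _
          _ ≤ 1/(j+1) + dist (pl2 (a (ψ j)) (-1 : ℝ)) (pl2 v (-1 : ℝ)) :=
              add_le_add (le_of_lt (hNVd j)) le_rfl
      · simpa using hone.add (tendsto_iff_dist_tendsto_zero.mp hcen2)
    exact ⟨Q, NV, hQmem, hQten, hNVmem, hNVten⟩
  · -- -v ∈ MmapLimsup Φ xb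
    refine ⟨fun j => xk (ψ j), fun j => b (ψ j), fun j => yk (ψ j), hxψ, hyψ, hbψ, ?_⟩
    intro k
    exact Set.mem_iUnion.mpr ⟨lk (ψ k), hb (ψ k)⟩
end
end
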